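/- arXiv:2311.05563 — 2 statements merged into one kernel-verified Lean document; each statement's English description precedes it below -/
import Mathlib

section
/- Let Ψ be an N×N complex matrix that is diagonalizable with eigenvectors u_1,…,u_N and pairwise distinct eigenvalues λ_1,…,λ_N. If v = Σ_j r_j u_j, then the Krylov subspace span{v, Ψv, Ψ²v, …, Ψ^{N-1}v} equals the span of the set of eigenvectors u_l for which r_l ≠ 0. -/
open Matrix in


theorem krylov_span_eq_span_of_nonzero_coeffs
    (N : ℕ) (Ψ : Matrix (Fin N) (Fin N) ℂ)
    (u : Fin N → (Fin N → ℂ)) (lam : Fin N → ℂ) (r : Fin N → ℂ) (v : Fin N → ℂ)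
    (hbasis : LinearIndependent ℂ u)
    (heig : ∀ j, Ψ.mulVec (u j) = lam j • u j)
    (hdist : Function.Injective lam)
    (hv : v = ∑ j, r j • u j) :
    Submodule.span ℂ {w | ∃ k < N, w = (Ψ ^ k).mulVec v} =
      Submodule.span ℂ (u '' {l | r l ≠ 0}) := by
  have key : ∀ k : ℕ, (Ψ ^ k).mulVec v = ∑ j, (lam j ^ k * r j) • u j := by
    intro k
    induction k with
    | zero => simp [hv]
    | succ k ih =>
      rw [pow_succ', ← Matrix.mulVec_mulVec, ih]
      simp only [← Matrix.mulVecLin_apply, map_sum, _root_.map_smul]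
      refine Finset.sum_congr rfl fun j _ => ?_
      rw [Matrix.mulVecLin_apply, heig j, smul_smul]
      ring_nf
  apply le_antisymm
  · rw [Submodule.span_le]
    rintro w ⟨k, hk, rfl⟩
    rw [key]
    apply Submodule.sum_mem
    intro j _
    by_cases hr : r j = 0
    · simp [hr]
    · exact Submodule.smul_mem _ _ (Submodule.subset_span ⟨j, hr, rfl⟩)
  · rw [Submodule.span_le]
    rintro w ⟨l, hl, rfl⟩
    set A : Matrix (Fin N) (Fin N) ℂ := (Matrix.vandermonde lam)ᵀ with hA
    have hdet : A.det ≠ 0 := by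
      rw [hA, Matrix.det_transpose, Matrix.det_vandermonde]
      apply Finset.prod_ne_zero_iff.2
      intro i _
      apply Finset.prod_ne_zero_iff.2
      intro j hj
      exact sub_ne_zero_of_ne fun h => (Finset.mem_Ioi.mp hj).ne' (hdist h)
    have hcomb : ∑ k : Fin N, (A⁻¹ l k) • ((Ψ ^ (k : ℕ)).mulVec v) = r l • u l := by
      have : ∀ k : Fin N, (A⁻¹ l k) • ((Ψ ^ (k : ℕ)).mulVec v)
          = ∑ j, (A⁻¹ l k * A k j) • (r j • u j) := by
        intro k
        rw [key, Finset.smul_sum]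
        refine Finset.sum_congr rfl fun j _ => ?_
        rw [smul_smul, smul_smul]
        congr 1
        rw [hA]
        simp [Matrix.vandermonde, mul_assoc]
      rw [Finset.sum_congr rfl fun k _ => this k, Finset.sum_comm]
      have hinv : A⁻¹ * A = 1 := Matrix.nonsing_inv_mul A (by simpa using hdet)
      calc ∑ j, ∑ k, (A⁻¹ l k * A k j) • (r j • u j)
          = ∑ j, ((A⁻¹ * A) l j) • (r j • u j) := by
            refine Finset.sum_congr rfl fun j _ => ?_
            simp [Matrix.mul_apply, Finset.sum_smul]
        _ = r l • u l := by
            rw [hinv]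
            simp [Matrix.one_apply]
    have hmem : r l • u l ∈ Submodule.span ℂ {w | ∃ k < N, w = (Ψ ^ k).mulVec v} := by
      rw [← hcomb]
      apply Submodule.sum_mem
      intro k _
      exact Submodule.smul_mem _ _ (Submodule.subset_span ⟨(k : ℕ), k.isLt, rfl⟩)
    have : u l = (r l)⁻¹ • (r l • u l) := by
      rw [smul_smul, inv_mul_cancel₀ hl, one_smul]
    rw [this]
    exact Submodule.smul_mem _ _ hmem
end

section
/- Let g = g₂ ∘ g₁ be a composition of complex polynomials with deg g₁ = a ≥ 2 and deg g₂ ≥ 1, and let t be a value such that g − t has deg g distinct roots. Then the fiber g⁻¹(t) is partitioned by g₁ into the fibers g₁⁻¹(z) over the roots z of g₂ − t, and each such fiber g₁⁻¹(z) has exactly a elements. -/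
open Polynomial

theorem fiber_partition_of_composition
    (g₁ g₂ : Polynomial ℂ) (t : ℂ)
    (ha : 2 ≤ g₁.natDegree) (hb : 1 ≤ g₂.natDegree)
    (hsep : (g₂.comp g₁ - C t).Separable) :
    (∀ z ∈ (g₂ - C t).roots, Set.ncard {x : ℂ | g₁.eval x = z} = g₁.natDegree) ∧
    ({x : ℂ | (g₂.comp g₁).eval x = t} =
      ⋃ z ∈ (g₂ - C t).roots.toFinset, {x : ℂ | g₁.eval x = z}) ∧
    (((g₂ - C t).roots.toFinset : Set ℂ).Pairwise fun z z' =>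
      Disjoint {x : ℂ | g₁.eval x = z} {x : ℂ | g₁.eval x = z'}) := by
  have hg2ne : g₂ - C t ≠ 0 := by
    intro h
    have h2 : (g₂ - C t).natDegree = g₂.natDegree := natDegree_sub_C
    rw [h, natDegree_zero] at h2
    omega
  refine ⟨?_, ?_, ?_⟩
  · intro z hz
    have hroot : (g₂ - C t).IsRoot z := (mem_roots hg2ne).mp hz
    have hdvd : (g₁ - C z) ∣ (g₂.comp g₁ - C t) := by
      have h1 : (X - C z) ∣ (g₂ - C t) := dvd_iff_isRoot.mpr hroot
      have := map_dvd (Polynomial.evalRingHom 0) h1 -- not right; use comp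
      calc (g₁ - C z) = (X - C z).comp g₁ := by simp [sub_comp]
        _ ∣ (g₂ - C t).comp g₁ := by
            obtain ⟨q, hq⟩ := h1
            exact ⟨q.comp g₁, by rw [hq, mul_comp]⟩
        _ = g₂.comp g₁ - C t := by simp [sub_comp]
    have hsep1 : (g₁ - C z).Separable := hsep.of_dvd hdvd
    have hnd : (g₁ - C z).natDegree = g₁.natDegree := natDegree_sub_C
    have hne : (g₁ - C z) ≠ 0 := by
      intro h
      rw [h, natDegree_zero] at hnd
      omega
    have hset : {x : ℂ | g₁.eval x = z} = ((g₁ - C z).roots.toFinset : Set ℂ) := by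
      ext x
      simp [mem_roots hne, IsRoot, sub_eq_zero, hne]
    rw [hset, Set.ncard_coe_finset, Multiset.toFinset_card_of_nodup
      (Polynomial.nodup_roots hsep1), ← hnd,
      ← splits_iff_card_roots.mp (IsAlgClosed.splits _)]
  · ext x
    simp only [Set.mem_setOf_eq, Set.mem_iUnion, Multiset.mem_toFinset, mem_roots hg2ne,
      eval_comp, IsRoot, eval_sub, eval_C, sub_eq_zero]
    constructor
    · intro h
      exact ⟨g₁.eval x, h, rfl⟩
    · rintro ⟨z, hz, rfl⟩
      exact hz
  · intro z hz z' hz' hne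
    exact Set.disjoint_left.mpr fun x hx hx' => hne (hx ▸ hx' ▸ rfl)
end
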